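/- For W(x) = 1/(1+|x|/2) on ℝ³ and L₊ f := −Δf − 3|x|⁻¹ W² f, one has L₊W = −2|x|⁻¹W³ = 2ΔW pointwise for x ≠ 0, and consequently ⟨L₊W, W⟩_{L²} = −2∫|∇W|² dx = −16π/3. -/

import Mathlib

open MeasureTheory Real

noncomputable section

abbrev E3 := EuclideanSpace ℝ (Fin 3)

def W (x : E3) : ℝ := (1 + ‖x‖ / 2)⁻¹

def lap (f : E3 → ℝ) (x : E3) : ℝ :=
  ∑ i : Fin 3,
    fderiv ℝ (fun y => fderiv ℝ f y (EuclideanSpace.single i 1)) x (EuclideanSpace.single i 1)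

/-- The linearized operator `L₊ f = -Δf - 3|x|⁻¹ W² f`. -/
def Lplus (f : E3 → ℝ) (x : E3) : ℝ := -lap f x - 3 * ‖x‖⁻¹ * (W x) ^ 2 * f x

/-! `W` is radial with profile `w r = (1 + r/2)⁻¹`, which solves `w' = -w²/2`. Hence the radial
Laplacian `w'' + 2 w'/r` equals `-w³/r`, i.e. `-ΔW = |x|⁻¹ W³`, and `|∇W|² = w⁴/4`. In polar
coordinates both integrals become `4π · 2/3`; the radial integrals have antiderivatives
`(2/3)(1 - w)³` and `(2/3)(1 - w)²(1 + 2w)`, since `w (1 + r/2) = 1`. -/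

open Filter Set Topology

section RadialCalculus

variable {E : Type*} [NormedAddCommGroup E] [InnerProductSpace ℝ E] {f : ℝ → ℝ} {f' : ℝ} {x : E}

theorem HasDerivAt.hasFDerivAt_comp_norm (hf : HasDerivAt f f' ‖x‖) (hx : x ≠ 0) :
    HasFDerivAt (fun y : E => f ‖y‖) ((f' / ‖x‖) • innerSL ℝ x) x := by
  have hsq : ‖x‖ ^ 2 ≠ 0 := pow_ne_zero 2 (norm_ne_zero_iff.2 hx)
  have hsqrt := Real.hasDerivAt_sqrt hsq
  rw [Real.sqrt_sq (norm_nonneg x)] at hsqrt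
  rw [← Real.sqrt_sq (norm_nonneg x)] at hf
  have := (hf.comp _ hsqrt).comp_hasFDerivAt x (hasStrictFDerivAt_norm_sq x).hasFDerivAt
  simp only [Function.comp_def, Real.sqrt_sq (norm_nonneg _)] at this
  refine this.congr_fderiv ?_
  ext v
  simp only [smul_apply, innerSL_apply_apply, smul_eq_mul, nsmul_eq_mul]
  field_simp
  norm_num

theorem HasDerivAt.hasGradientAt_comp_norm [CompleteSpace E] (hf : HasDerivAt f f' ‖x‖)
    (hx : x ≠ 0) : HasGradientAt (fun y : E => f ‖y‖) ((f' / ‖x‖) • x) x := by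
  rw [hasGradientAt_iff_hasFDerivAt, map_smul]
  exact hf.hasFDerivAt_comp_norm hx

end RadialCalculus

theorem lap_comp_norm {f f' : ℝ → ℝ} {f'' : ℝ} {x : E3} (hx : x ≠ 0)
    (hf : ∀ᶠ r in 𝓝 ‖x‖, HasDerivAt f (f' r) r) (hf' : HasDerivAt f' f'' ‖x‖) :
    lap (fun y => f ‖y‖) x = f'' + 2 / ‖x‖ * f' ‖x‖ := by
  have hr : ‖x‖ ≠ 0 := norm_ne_zero_iff.2 hx
  have hk : HasDerivAt (fun r => f' r / r) ((f'' * ‖x‖ - f' ‖x‖ * 1) / ‖x‖ ^ 2) ‖x‖ :=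
    hf'.div (hasDerivAt_id _) hr
  have hfirst : ∀ i, (fun y => fderiv ℝ (fun y : E3 => f ‖y‖) y (EuclideanSpace.single i 1))
      =ᶠ[𝓝 x] fun y => f' ‖y‖ / ‖y‖ * y i := by
    intro i
    filter_upwards [continuous_norm.continuousAt.eventually hf, isOpen_ne.mem_nhds hx]
      with y hfy hy
    simp [(hfy.hasFDerivAt_comp_norm hy).fderiv, EuclideanSpace.inner_single_right]
  have hsecond : ∀ i, fderiv ℝ (fun y => fderiv ℝ (fun y : E3 => f ‖y‖) y
      (EuclideanSpace.single i 1)) x (EuclideanSpace.single i 1)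
      = f' ‖x‖ / ‖x‖ + (f'' * ‖x‖ - f' ‖x‖) / ‖x‖ ^ 3 * x i ^ 2 := by
    intro i
    have hproj : HasFDerivAt (fun y : E3 => y i) (EuclideanSpace.proj i : E3 →L[ℝ] ℝ) x :=
      (EuclideanSpace.proj i : E3 →L[ℝ] ℝ).hasFDerivAt
    have hprod : HasFDerivAt (fun y : E3 => f' ‖y‖ / ‖y‖ * y i) _ x :=
      (hk.hasFDerivAt_comp_norm hx).mul hproj
    rw [(hfirst i).fderiv_eq, hprod.fderiv]
    simp only [add_apply, smul_apply, PiLp.proj_apply, PiLp.single_eq_same, smul_eq_mul,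
      coe_innerSL_apply, EuclideanSpace.inner_single_right, ringHom_apply, one_mul, mul_one]
    field_simp
  simp only [lap, hsecond, Finset.sum_add_distrib, ← Finset.mul_sum, Finset.sum_const,
    Finset.card_univ, Fintype.card_fin, nsmul_eq_mul]
  rw [← EuclideanSpace.real_norm_sq_eq]
  field_simp
  ring

def w (r : ℝ) : ℝ := (1 + r / 2)⁻¹

theorem W_eq_w_norm : W = fun x => w ‖x‖ := rfl

section Profile

variable {r : ℝ}

theorem w_mul_one_add (hr : -2 < r) : w r * (1 + r / 2) = 1 :=
  inv_mul_cancel₀ (by linarith)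

theorem hasDerivAt_w (hr : -2 < r) : HasDerivAt w (-w r ^ 2 / 2) r := by
  have hu : 1 + r / 2 ≠ 0 := by linarith
  refine ((((hasDerivAt_id' r).div_const 2).const_add 1).inv hu).congr_deriv ?_
  simp only [w]
  field_simp

theorem hasDerivAt_deriv_w (hr : -2 < r) :
    HasDerivAt (fun r => -w r ^ 2 / 2) (w r ^ 3 / 2) r := by
  refine ((((hasDerivAt_w hr).pow 2).neg).div_const 2).congr_deriv ?_
  norm_num
  ring

theorem tendsto_w_atTop : Tendsto w atTop (𝓝 0) :=
  tendsto_inv_atTop_zero.comp <| tendsto_atTop_add_const_left _ 1 <|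
    tendsto_id.atTop_div_const two_pos

end Profile

theorem lap_W {x : E3} (hx : x ≠ 0) : lap W x = -‖x‖⁻¹ * W x ^ 3 := by
  have hr : 0 < ‖x‖ := norm_pos_iff.2 hx
  have hderiv : ∀ᶠ r in 𝓝 ‖x‖, HasDerivAt w (-w r ^ 2 / 2) r :=
    (lt_mem_nhds (by linarith)).mono fun r hr => hasDerivAt_w hr
  rw [W_eq_w_norm, lap_comp_norm hx hderiv (hasDerivAt_deriv_w (by linarith))]
  have := w_mul_one_add (r := ‖x‖) (by linarith)
  field_simp
  linear_combination (2 * w ‖x‖ ^ 2) * this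

theorem norm_gradient_W_sq {x : E3} (hx : x ≠ 0) : ‖gradient W x‖ ^ 2 = w ‖x‖ ^ 4 / 4 := by
  have hr : 0 < ‖x‖ := norm_pos_iff.2 hx
  rw [W_eq_w_norm, ((hasDerivAt_w (by linarith)).hasGradientAt_comp_norm hx).gradient, norm_smul,
    Real.norm_eq_abs, mul_pow, sq_abs]
  field_simp
  ring

theorem integral_comp_norm_E3 (f : ℝ → ℝ) :
    ∫ x : E3, f ‖x‖ = 4 * π * ∫ r in Ioi 0, r ^ 2 * f r := by
  have hdim : Module.finrank ℝ E3 = 3 := finrank_euclideanSpace_fin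
  have hball : volume.real (Metric.ball (0 : E3) 1) = 4 * π / 3 := by
    rw [measureReal_def, InnerProductSpace.volume_ball_of_dim_odd (k := 1) hdim]
    norm_num [ENNReal.toReal_ofReal (by positivity : 0 ≤ π * 4 / 3)]
    ring
  rw [integral_fun_norm_addHaar, hdim, hball]
  simp only [nsmul_eq_mul, smul_eq_mul]
  norm_num
  ring

theorem integral_sq_mul_w_pow_four : ∫ r in Ioi 0, r ^ 2 * (w r ^ 4 / 4) = 2 / 3 := by
  have hderiv : ∀ r ∈ Ici (0 : ℝ), HasDerivAt (fun r => 2 / 3 * (1 - w r) ^ 3)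
      (r ^ 2 * (w r ^ 4 / 4)) r := by
    intro r hr
    have hr : -2 < r := by linarith [mem_Ici.1 hr]
    refine ((((hasDerivAt_w hr).const_sub 1).pow 3).const_mul _).congr_deriv ?_
    norm_num
    linear_combination (-w r ^ 2 * (1 - w r + r * w r / 2)) * w_mul_one_add hr
  have hlim : Tendsto (fun r => 2 / 3 * (1 - w r) ^ 3) atTop (𝓝 (2 / 3)) := by
    simpa using ((tendsto_w_atTop.const_sub 1).pow 3).const_mul (2 / 3 : ℝ)
  rw [integral_Ioi_of_hasDerivAt_of_nonneg' hderiv (fun r _ => by positivity) hlim]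
  norm_num [w]

theorem integral_mul_w_pow_four : ∫ r in Ioi 0, r * w r ^ 4 = 2 / 3 := by
  have hderiv : ∀ r ∈ Ici (0 : ℝ), HasDerivAt (fun r => 2 / 3 * ((1 - w r) ^ 2 * (1 + 2 * w r)))
      (r * w r ^ 4) r := by
    intro r hr
    have hr : -2 < r := by linarith [mem_Ici.1 hr]
    refine (((((hasDerivAt_w hr).const_sub 1).pow 2).mul
      (((hasDerivAt_w hr).const_mul 2).const_add 1)).const_mul _).congr_deriv ?_
    norm_num
    linear_combination (-2 * w r ^ 3) * w_mul_one_add hr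
  have hlim : Tendsto (fun r => 2 / 3 * ((1 - w r) ^ 2 * (1 + 2 * w r))) atTop (𝓝 (2 / 3)) := by
    simpa using (((tendsto_w_atTop.const_sub 1).pow 2).mul
      ((tendsto_w_atTop.const_mul 2).const_add 1)).const_mul (2 / 3 : ℝ)
  rw [integral_Ioi_of_hasDerivAt_of_nonneg' hderiv
    (fun r hr => mul_nonneg (le_of_lt hr) (by positivity)) hlim]
  norm_num [w]

theorem integral_norm_gradient_W_sq : ∫ x : E3, ‖gradient W x‖ ^ 2 = 8 * π / 3 := by
  have hae : (fun x : E3 => ‖gradient W x‖ ^ 2) =ᵐ[volume] fun x => w ‖x‖ ^ 4 / 4 := by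
    filter_upwards [compl_mem_ae_iff.2 (measure_singleton (0 : E3))] with x hx
    exact norm_gradient_W_sq hx
  rw [integral_congr_ae hae, integral_comp_norm_E3 (fun r => w r ^ 4 / 4),
    integral_sq_mul_w_pow_four]
  ring

theorem integral_inv_norm_mul_W_pow_four : ∫ x : E3, ‖x‖⁻¹ * W x ^ 4 = 8 * π / 3 := by
  rw [W_eq_w_norm, integral_comp_norm_E3 (fun r => r⁻¹ * w r ^ 4)]
  simp_rw [← mul_assoc, sq, mul_self_mul_inv, integral_mul_w_pow_four]
  ring

theorem stmt_7 :
    (∀ x : E3, x ≠ 0 → Lplus W x = -2 * ‖x‖⁻¹ * (W x) ^ 3 ∧ Lplus W x = 2 * lap W x) ∧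
    (∫ x : E3, ‖gradient W x‖ ^ 2) - 3 * (∫ x : E3, ‖x‖⁻¹ * (W x) ^ 4)
      = -2 * (∫ x : E3, ‖gradient W x‖ ^ 2) ∧
    (∫ x : E3, ‖gradient W x‖ ^ 2) - 3 * (∫ x : E3, ‖x‖⁻¹ * (W x) ^ 4) = -(16 * π / 3) := by
  rw [integral_norm_gradient_W_sq, integral_inv_norm_mul_W_pow_four]
  refine ⟨fun x hx => ⟨?_, ?_⟩, by ring, by ring⟩ <;> rw [Lplus, lap_W hx] <;> ring
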